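/- For every finite simple graph G, γᵢ(G) ≤ γ_gr(G) ≤ n(G) − δ(G), where n(G) is the order and δ(G) the minimum degree of G. -/

import Mathlib

open Finset

open scoped Classical

noncomputable section

namespace IndicatedDom

variable {V : Type*} [Fintype V]

/-- Closed neighborhood `N[v]` as a `Finset`. -/
def cnbhd (G : SimpleGraph V) (v : V) : Finset V :=
  insert v (G.neighborFinset v)

/-- `D` is a dominating set of `G`. -/
def Dominates (G : SimpleGraph V) (D : Finset V) : Prop :=
  ∀ u, ∃ v ∈ D, u ∈ cnbhd G v

/-- The set of vertices not dominated by `D`. -/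
def undom (G : SimpleGraph V) (D : Finset V) : Finset V :=
  univ.filter fun u => ∀ v ∈ D, u ∉ cnbhd G v

/-- Game value of the indicated domination game with a fuel parameter:
given the set `D` of vertices selected so far, Dominator indicates an
undominated vertex `u` (minimizing), Staller selects a vertex of `N[u]`
(maximizing); each selection counts one. -/
def giAux (G : SimpleGraph V) : ℕ → Finset V → ℕ
  | 0, _ => 0
  | (fuel+1), D =>
    if h : (undom G D).Nonempty then
      (undom G D).inf' h fun u =>
        (cnbhd G u).sup' ⟨u, Finset.mem_insert_self u _⟩ fun v => giAux G fuel (insert v D) + 1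
    else 0

/-- The indicated domination number `γᵢ(G)`. -/
def indicatedDomNum (G : SimpleGraph V) : ℕ :=
  giAux G (Fintype.card V) ∅

/-- Game value of the standard domination game with a fuel parameter:
`dom = true` means it is Dominator's turn (minimizing); legal moves are
vertices dominating at least one new vertex. -/
def gameAux (G : SimpleGraph V) : ℕ → Bool → Finset V → ℕ
  | 0, _, _ => 0
  | (fuel+1), dom, D =>
    if h : (univ.filter fun v => ∃ u ∈ cnbhd G v, u ∈ undom G D).Nonempty then
      if dom then
        (univ.filter fun v => ∃ u ∈ cnbhd G v, u ∈ undom G D).inf' h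
          fun v => gameAux G fuel false (insert v D) + 1
      else
        (univ.filter fun v => ∃ u ∈ cnbhd G v, u ∈ undom G D).sup' h
          fun v => gameAux G fuel true (insert v D) + 1
    else 0

/-- The game domination number `γ_g(G)` (Dominator starts). -/
def gameDomNum (G : SimpleGraph V) : ℕ :=
  gameAux G (Fintype.card V) true ∅

/-- A minimal dominating set. -/
def IsMinimalDominating (G : SimpleGraph V) (D : Finset V) : Prop :=
  Dominates G D ∧ ∀ D' ⊂ D, ¬ Dominates G D'

/-- The upper domination number `Γ(G)`. -/
def upperDomNum (G : SimpleGraph V) : ℕ :=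
  sSup {k | ∃ D : Finset V, IsMinimalDominating G D ∧ D.card = k}

/-- A dominating (Grundy) sequence: every vertex dominates something new,
and the whole sequence dominates `G`. -/
def IsDominatingSeq (G : SimpleGraph V) (l : List V) : Prop :=
  (∀ i : Fin l.length, ∃ u, u ∈ cnbhd G (l.get i) ∧
      ∀ j : Fin l.length, (j : ℕ) < (i : ℕ) → u ∉ cnbhd G (l.get j)) ∧
    Dominates G l.toFinset

/-- The Grundy domination number `γ_gr(G)`. -/
def grundyDomNum (G : SimpleGraph V) : ℕ :=
  sSup {k | ∃ l : List V, IsDominatingSeq G l ∧ l.length = k}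

/-- The independence number `α(G)`. -/
def indepNum (G : SimpleGraph V) : ℕ :=
  sSup {k | ∃ S : Finset V, (∀ x ∈ S, ∀ y ∈ S, ¬ G.Adj x y) ∧ S.card = k}

/-- `S` is irredundant: every `x ∈ S` has a private neighbor w.r.t. `S`. -/
def Irredundant (G : SimpleGraph V) (S : Finset V) : Prop :=
  ∀ x ∈ S, ∃ w, (∃ v ∈ S, w ∈ cnbhd G v) ∧ ¬ ∃ v ∈ S.erase x, w ∈ cnbhd G v

/-- The upper irredundance number `IR(G)`. -/
def upperIrredNum (G : SimpleGraph V) : ℕ :=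
  sSup {k | ∃ S : Finset V, Irredundant G S ∧ (∀ T, S ⊂ T → ¬ Irredundant G T) ∧ S.card = k}

/-- The star `K_{1,n}` with center `0`. -/
def starGraph (n : ℕ) : SimpleGraph (Fin (n+1)) where
  Adj a b := a ≠ b ∧ (a = 0 ∨ b = 0)
  symm := by constructor; intro a b h; exact ⟨h.1.symm, h.2.symm⟩
  loopless := by constructor; intro a h; exact h.1 rfl

/-- Two copies of `K_n` with a matching joining corresponding vertices of
index `≥ 1` (i.e. `K_n □ K₂` minus the matching edge at index `0`). -/
def Hgraph (n : ℕ) : SimpleGraph (Fin n × Bool) where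
  Adj a b := (a.2 = b.2 ∧ a.1 ≠ b.1) ∨ (a.2 ≠ b.2 ∧ a.1 = b.1 ∧ (a.1 : ℕ) ≠ 0)
  symm := by
    constructor
    rintro ⟨i, s⟩ ⟨j, t⟩ (⟨h1, h2⟩ | ⟨h1, h2, h3⟩)
    · exact Or.inl ⟨h1.symm, h2.symm⟩
    · exact Or.inr ⟨h1.symm, h2.symm, h2 ▸ h3⟩
  loopless := by constructor; rintro ⟨i, s⟩ (⟨_, h⟩ | ⟨h, _⟩) <;> exact h rfl

/-- The `k`-th power of the path on `n` vertices: `i ~ j` iff `1 ≤ |i-j| ≤ k`. -/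
def pathPow (n k : ℕ) : SimpleGraph (Fin n) where
  Adj i j := i ≠ j ∧ (i : ℕ) ≤ (j : ℕ) + k ∧ (j : ℕ) ≤ (i : ℕ) + k
  symm := by constructor; intro i j h; exact ⟨h.1.symm, h.2.2, h.2.1⟩
  loopless := by constructor; intro i h; exact h.1 rfl

/-- The cycle on `m` vertices (for `m ≥ 3`), modeled on `ZMod m`. -/
def cyc (m : ℕ) : SimpleGraph (ZMod m) where
  Adj i j := i ≠ j ∧ (i + 1 = j ∨ j + 1 = i)
  symm := by constructor; intro i j h; exact ⟨h.1.symm, h.2.symm⟩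
  loopless := by constructor; intro i h; exact h.1 rfl

/-- The graph `D₁`: a `9`-cycle `x₁x₂…x₉` plus chords `x₁x₃, x₄x₆, x₇x₉`
(vertex `xᵢ` is represented by `i - 1 : ZMod 9`). -/
def DGraph : SimpleGraph (ZMod 9) where
  Adj i j := i ≠ j ∧ (i + 1 = j ∨ j + 1 = i ∨
    (i = 0 ∧ j = 2) ∨ (i = 2 ∧ j = 0) ∨ (i = 3 ∧ j = 5) ∨ (i = 5 ∧ j = 3) ∨
    (i = 6 ∧ j = 8) ∨ (i = 8 ∧ j = 6))
  symm := by constructor; intro i j h; refine ⟨h.1.symm, ?_⟩; tauto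
  loopless := by constructor; intro i h; exact h.1 rfl

/-
In the indicated game, whatever undominated vertex `u` Dominator indicates, every vertex of
`N[u]` footprints `u`; so the selected vertices always form a legal sequence, whatever Staller
does, and a legal sequence extends greedily to a Grundy dominating sequence.

For the upper bound, the last vertex `v` of a Grundy dominating sequence footprints some
`u ∈ N[v]` that no earlier vertex dominates; hence all earlier vertices lie outside `N[u]`,
which has at least `δ(G) + 1` elements.
-/

lemma mem_cnbhd_comm {G : SimpleGraph V} {u v : V} : u ∈ cnbhd G v ↔ v ∈ cnbhd G u := by
  simp [cnbhd, eq_comm, G.adj_comm]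

lemma self_mem_cnbhd (G : SimpleGraph V) (v : V) : v ∈ cnbhd G v :=
  mem_insert_self _ _

lemma card_cnbhd (G : SimpleGraph V) (v : V) : (cnbhd G v).card = G.degree v + 1 := by
  rw [cnbhd, card_insert_of_notMem (by simp), SimpleGraph.card_neighborFinset_eq_degree]

lemma mem_undom {G : SimpleGraph V} {D : Finset V} {u : V} :
    u ∈ undom G D ↔ ∀ v ∈ D, u ∉ cnbhd G v := by
  simp [undom]

lemma dominates_of_undom_eq_empty {G : SimpleGraph V} {D : Finset V} (h : undom G D = ∅) :
    Dominates G D := by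
  intro u
  by_contra! hu
  simpa [h] using mem_undom.2 hu

lemma undom_insert_ssubset {G : SimpleGraph V} {D : Finset V} {u v : V}
    (hu : u ∈ undom G D) (huv : u ∈ cnbhd G v) : undom G (insert v D) ⊂ undom G D := by
  refine ssubset_iff_of_subset (fun w hw => ?_) |>.2 ⟨u, hu, fun hu' => ?_⟩
  · exact mem_undom.2 fun x hx => mem_undom.1 hw x (mem_insert_of_mem hx)
  · exact mem_undom.1 hu' v (mem_insert_self _ _) huv

lemma toFinset_append_singleton {α : Type*} (l : List α) (a : α) :
    (l ++ [a]).toFinset = insert a l.toFinset := by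
  ext; simp

def IsLegalSeq (G : SimpleGraph V) (l : List V) : Prop :=
  ∀ i : Fin l.length, ∃ u, u ∈ cnbhd G (l.get i) ∧
    ∀ j : Fin l.length, (j : ℕ) < (i : ℕ) → u ∉ cnbhd G (l.get j)

namespace IsLegalSeq

variable {G : SimpleGraph V} {l : List V}

lemma nil : IsLegalSeq G [] :=
  fun i => i.elim0

lemma nodup (hl : IsLegalSeq G l) : l.Nodup := by
  refine List.nodup_iff_injective_get.2 fun i j hij => ?_
  by_contra hne
  rcases Fin.lt_or_lt_of_ne hne with h | h
  · obtain ⟨u, hu, hnew⟩ := hl j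
    exact hnew i h (hij ▸ hu)
  · obtain ⟨u, hu, hnew⟩ := hl i
    exact hnew j h (hij ▸ hu)

lemma append_singleton (hl : IsLegalSeq G l) {u v : V} (hu : u ∈ undom G l.toFinset)
    (huv : u ∈ cnbhd G v) : IsLegalSeq G (l ++ [v]) := by
  have get_of_lt (j : Fin (l ++ [v]).length) (hj : (j : ℕ) < l.length) :
      (l ++ [v]).get j = l.get ⟨j, hj⟩ := List.getElem_append_left hj
  intro i
  by_cases hi : (i : ℕ) < l.length
  · obtain ⟨w, hw, hnew⟩ := hl ⟨i, hi⟩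
    refine ⟨w, get_of_lt i hi ▸ hw, fun j hj => ?_⟩
    rw [get_of_lt j (hj.trans hi)]
    exact hnew _ hj
  · have hi' := i.2
    simp only [List.length_append, List.length_singleton] at hi'
    have hlast : (l ++ [v]).get i = v := List.getElem_concat_length (by omega) _
    refine ⟨u, by rwa [hlast], fun j hj => ?_⟩
    have hj' : (j : ℕ) < l.length := by omega
    rw [get_of_lt j hj']
    exact mem_undom.1 hu _ (List.mem_toFinset.2 (List.getElem_mem hj'))

lemma exists_undom_of_append_singleton {v : V} (hl : IsLegalSeq G (l ++ [v])) :
    ∃ u ∈ undom G l.toFinset, u ∈ cnbhd G v := by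
  obtain ⟨u, hu, hnew⟩ := hl ⟨l.length, by simp⟩
  refine ⟨u, mem_undom.2 fun w hw => ?_, by simpa using hu⟩
  obtain ⟨j, hj, rfl⟩ := List.mem_iff_getElem.1 (List.mem_toFinset.1 hw)
  simpa [List.getElem_append_left hj] using hnew ⟨j, by simp; omega⟩ hj

theorem exists_isDominatingSeq_length_ge {l : List V} (hl : IsLegalSeq G l) :
    ∃ l', IsDominatingSeq G l' ∧ l.length ≤ l'.length := by
  by_cases h : undom G l.toFinset = ∅
  · exact ⟨l, ⟨hl, dominates_of_undom_eq_empty h⟩, le_rfl⟩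
  obtain ⟨u, hu⟩ := nonempty_iff_ne_empty.2 h
  obtain ⟨l', hl', hlen⟩ :=
    (hl.append_singleton hu (self_mem_cnbhd G u)).exists_isDominatingSeq_length_ge
  exact ⟨l', hl', by simp only [List.length_append, List.length_singleton] at hlen; omega⟩
termination_by (undom G l.toFinset).card
decreasing_by
  simpa only [toFinset_append_singleton] using
    card_lt_card (undom_insert_ssubset hu (self_mem_cnbhd G u))

lemma length_le_card_sub_minDegree (hl : IsLegalSeq G l) :
    l.length ≤ Fintype.card V - G.minDegree := by
  obtain rfl | ⟨l, v, rfl⟩ := l.eq_nil_or_concat'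
  · simp
  obtain ⟨u, hu, huv⟩ := hl.exists_undom_of_append_singleton
  have hdisj : Disjoint l.toFinset (cnbhd G u) :=
    disjoint_left.2 fun w hw hwu => mem_undom.1 hu w hw (mem_cnbhd_comm.1 hwu)
  have hcard : l.length + (G.degree u + 1) ≤ Fintype.card V := by
    rw [← List.toFinset_card_of_nodup hl.nodup.of_append_left, ← card_cnbhd,
      ← card_union_of_disjoint hdisj]
    exact card_le_univ _
  have := G.minDegree_le_degree u
  simp only [List.length_append, List.length_singleton]
  omega

lemma length_le_grundyDomNum (hl : IsLegalSeq G l) : l.length ≤ grundyDomNum G := by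
  obtain ⟨l', hl', hlen⟩ := hl.exists_isDominatingSeq_length_ge
  refine hlen.trans (le_csSup ⟨Fintype.card V, ?_⟩ ⟨l', hl', rfl⟩)
  rintro _ ⟨l'', hl'', rfl⟩
  simpa using (IsLegalSeq.nodup hl''.1).length_le_card

end IsLegalSeq

theorem giAux_add_length_le_grundyDomNum (G : SimpleGraph V) (fuel : ℕ) {l : List V}
    (hl : IsLegalSeq G l) : giAux G fuel l.toFinset + l.length ≤ grundyDomNum G := by
  induction fuel generalizing l with
  | zero => simpa [giAux] using hl.length_le_grundyDomNum
  | succ n ih =>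
    rw [giAux]
    split_ifs with h
    · obtain ⟨u, hu⟩ := h
      obtain ⟨v, hv, hmax⟩ := exists_mem_eq_sup' ⟨u, self_mem_cnbhd G u⟩
        fun v => giAux G n (insert v l.toFinset) + 1
      have hstep := ih (hl.append_singleton hu (mem_cnbhd_comm.1 hv))
      calc _ ≤ giAux G n (insert v l.toFinset) + 1 + l.length := by
            gcongr; exact (inf'_le _ hu).trans_eq hmax
        _ = giAux G n (l ++ [v]).toFinset + (l ++ [v]).length := by
          rw [toFinset_append_singleton, List.length_append, List.length_singleton]; ring
        _ ≤ grundyDomNum G := hstep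
    · simpa using hl.length_le_grundyDomNum

theorem grundyDomNum_le_card_sub_minDegree (G : SimpleGraph V) :
    grundyDomNum G ≤ Fintype.card V - G.minDegree :=
  csSup_le' <| by
    rintro _ ⟨l, hl, rfl⟩
    exact IsLegalSeq.length_le_card_sub_minDegree hl.1

/-- `γᵢ(G) ≤ γ_gr(G) ≤ n(G) - δ(G)`. -/
theorem stmt6 {V : Type*} [Fintype V] (G : SimpleGraph V) :
    indicatedDomNum G ≤ grundyDomNum G ∧
      grundyDomNum G ≤ Fintype.card V - G.minDegree :=
  ⟨by simpa [indicatedDomNum] using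
      giAux_add_length_le_grundyDomNum G (Fintype.card V) IsLegalSeq.nil,
    grundyDomNum_le_card_sub_minDegree G⟩

end IndicatedDom
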